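/- Let C be the circle in ℝ² with center (7/4, 1) and radius 1/4, and let 𝔖 = ⋃_{i∈ℕ} (i·C̄) ∩ ℕ² where C̄ is the closed disk. With τ₁, τ₂ the two tangent rays from the origin to C̄ and nᵢ the smallest element of 𝔖 on τᵢ, the semigroup 𝔖 satisfies: int(C) = int(𝔖) and 𝔖 ∩ τᵢ = {k nᵢ : k ∈ ℕ} for i = 1,2, where int(C) denotes the lattice points strictly inside the cone and int(𝔖) = 𝔖 minus the points on τ₁ ∪ τ₂; hence 𝔖 satisfies the combinatorial Cohen-Macaulay condition. -/

import Mathlib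

open scoped Pointwise

def toQ (p : ℤ × ℤ) : ℚ × ℚ := ((p.1 : ℚ), (p.2 : ℚ))
def toR (p : ℤ × ℤ) : ℝ × ℝ := ((p.1 : ℝ), (p.2 : ℝ))
def isNat (p : ℤ × ℤ) : Prop := 0 ≤ p.1 ∧ 0 ≤ p.2
def inCone (n₁ n₂ a : ℤ × ℤ) : Prop :=
  ∃ q₁ q₂ : ℚ, 0 ≤ q₁ ∧ 0 ≤ q₂ ∧ toQ a = q₁ • toQ n₁ + q₂ • toQ n₂
def onRay (n a : ℤ × ℤ) : Prop := ∃ q : ℚ, 0 ≤ q ∧ toQ a = q • toQ n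


/-- The closed disk with center `(7/4, 1)` and radius `1/4`. -/
def disk : Set (ℝ × ℝ) :=
  {p : ℝ × ℝ | (p.1 - 7 / 4) ^ 2 + (p.2 - 1) ^ 2 ≤ (1 / 4 : ℝ) ^ 2}

/-- The circle semigroup `𝔖 = ⋃_{i∈ℕ} (i·C̄) ∩ ℕ²`. -/
def circSem : Set (ℤ × ℤ) :=
  {a : ℤ × ℤ | a = 0 ∨ ∃ i : ℕ, toR a ∈ (i : ℝ) • disk}

/-- `a` lies on the real ray through `t`. -/
def onRayR (t : ℝ × ℝ) (a : ℤ × ℤ) : Prop := ∃ r : ℝ, 0 ≤ r ∧ toR a = r • t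

/-- `a` lies in the real cone spanned by `t₁`, `t₂`. -/
def inConeR (t₁ t₂ : ℝ × ℝ) (a : ℤ × ℤ) : Prop :=
  ∃ r₁ r₂ : ℝ, 0 ≤ r₁ ∧ 0 ≤ r₂ ∧ toR a = r₁ • t₁ + r₂ • t₂

/-!
In the coordinates `ℓ₁ = 3x - 4y`, `ℓ₂ = 12y - 5x`, which vanish on the tangent rays through
`p₁ = (8/5, 6/5)` and `p₂ = (24/13, 10/13)`, a lattice point lies in `i • C̄` iff
`(32 i - 13 ℓ₁ - 5 ℓ₂)² ≤ 4 ℓ₁ ℓ₂`; in particular `𝔖` lies in the cone `ℓ₁, ℓ₂ ≥ 0`. Inside the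
open cone the admissible `i` form an interval of length `√(ℓ₁ ℓ₂) / 8` centred at
`(13 ℓ₁ + 5 ℓ₂) / 32`, which contains an integer as soon as `ℓ₁ ℓ₂ ≥ 64`; the finitely many
remaining lattice points are checked directly. On a tangent ray the interval shrinks to a point
and membership in `𝔖` becomes a parity condition on the multiple of the primitive vector
`(4, 3)`, resp. `(12, 5)`. Hence `n₁ = (8, 6)`, `n₂ = (24, 10)`, and a point of `τᵢ` outside `𝔖`
stays outside after adding `nᵢ`.
-/

namespace CircleSemigroup

lemma toR_injective : Function.Injective toR := fun a b h => by
  simp only [toR, Prod.mk.injEq, Int.cast_inj] at h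
  exact Prod.ext h.1 h.2

lemma toR_zero : toR 0 = 0 := Prod.ext Int.cast_zero Int.cast_zero

lemma toR_nsmul (k : ℕ) (a : ℤ × ℤ) : toR (k • a) = (k : ℝ) • toR a := by
  simp [toR, Prod.smul_mk]

lemma inConeR_comm {t₁ t₂ : ℝ × ℝ} {a : ℤ × ℤ} : inConeR t₁ t₂ a ↔ inConeR t₂ t₁ a := by
  constructor <;> rintro ⟨r₁, r₂, h₁, h₂, h⟩ <;> exact ⟨r₂, r₁, h₂, h₁, by rw [h, add_comm]⟩

section Cone

variable {t₁ t₂ : ℝ × ℝ} {a : ℤ × ℤ} {c₁ c₂ : ℝ}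

lemma inConeR_iff_of_linearIndependent (hli : LinearIndependent ℝ ![t₁, t₂])
    (ha : toR a = c₁ • t₁ + c₂ • t₂) : inConeR t₁ t₂ a ↔ 0 ≤ c₁ ∧ 0 ≤ c₂ := by
  constructor
  · rintro ⟨r₁, r₂, h₁, h₂, h⟩
    obtain ⟨rfl, rfl⟩ := hli.eq_of_pair (h.symm.trans ha)
    exact ⟨h₁, h₂⟩
  · rintro ⟨h₁, h₂⟩
    exact ⟨c₁, c₂, h₁, h₂, ha⟩

lemma onRayR_iff_of_linearIndependent (hli : LinearIndependent ℝ ![t₁, t₂])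
    (ha : toR a = c₁ • t₁ + c₂ • t₂) : onRayR t₁ a ↔ 0 ≤ c₁ ∧ c₂ = 0 := by
  constructor
  · rintro ⟨r, hr, h⟩
    have : r • t₁ + (0 : ℝ) • t₂ = c₁ • t₁ + c₂ • t₂ := by rw [zero_smul, add_zero, ← h, ha]
    obtain ⟨rfl, rfl⟩ := hli.eq_of_pair this
    exact ⟨hr, rfl⟩
  · rintro ⟨h₁, rfl⟩
    exact ⟨c₁, h₁, by simpa using ha⟩

end Cone

section LatticeRay

variable {S : Set (ℤ × ℤ)} {R : ℤ × ℤ → Prop} {e : ℤ × ℤ}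

lemma mem_and_iff_exists_two_nsmul (hR : ∀ a, R a ↔ ∃ k : ℕ, a = k • e)
    (hS : ∀ k : ℕ, k • e ∈ S ↔ Even k) (a : ℤ × ℤ) :
    (a ∈ S ∧ R a) ↔ ∃ k : ℕ, a = k • 2 • e := by
  rw [hR]
  constructor
  · rintro ⟨haS, k, rfl⟩
    obtain ⟨j, rfl⟩ := (hS k).1 haS
    exact ⟨j, by rw [smul_smul, ← two_mul, mul_comm]⟩
  · rintro ⟨k, rfl⟩
    rw [smul_smul]
    exact ⟨(hS _).2 ⟨k, by ring⟩, _, rfl⟩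

lemma add_two_nsmul_notMem (hR : ∀ a, R a ↔ ∃ k : ℕ, a = k • e)
    (hS : ∀ k : ℕ, k • e ∈ S ↔ Even k) {a : ℤ × ℤ} (ha : R a) (haS : a ∉ S) :
    a + 2 • e ∉ S := by
  obtain ⟨k, rfl⟩ := (hR a).1 ha
  rw [← add_smul, hS, Nat.even_add]
  rw [hS] at haS
  simp [haS]

lemma eq_two_nsmul_of_minimal (hR : ∀ a, R a ↔ ∃ k : ℕ, a = k • e)
    (hS : ∀ k : ℕ, k • e ∈ S ↔ Even k) (he : e ≠ 0) {n : ℤ × ℤ} (hn0 : n ≠ 0) (hnS : n ∈ S)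
    (hnR : R n) (hmin : ∀ a ∈ S, a ≠ 0 → R a → ∃ r : ℝ, 1 ≤ r ∧ toR a = r • toR n) :
    n = 2 • e := by
  obtain ⟨r, hr, h⟩ :=
    hmin _ ((hS 2).2 even_two) (smul_ne_zero two_ne_zero he) ((hR _).2 ⟨2, rfl⟩)
  obtain ⟨k, rfl⟩ := (hR n).1 hnR
  have hk : 2 ≤ k := by
    obtain ⟨j, rfl⟩ := (hS k).1 hnS
    have : j ≠ 0 := by rintro rfl; simp at hn0
    omega
  have htoR : toR e ≠ 0 := fun h0 => he (toR_injective (h0.trans toR_zero.symm))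
  rw [toR_nsmul, toR_nsmul, smul_smul] at h
  have h2 : (2 : ℝ) = r * k := smul_left_injective ℝ htoR (by simpa using h)
  have hk2 : (k : ℝ) ≤ 2 := by nlinarith [(show (2 : ℝ) ≤ k by exact_mod_cast hk)]
  rw [le_antisymm (by exact_mod_cast hk2) hk]

end LatticeRay

lemma sq_mod_le_of_mul_lt_64 : ∀ u v : Fin 64, 0 < u.val → 0 < v.val → u.val * v.val < 64 →
    (v.val + 7 * u.val) % 16 = 0 →
    ((13 * u.val + 5 * v.val) % 32) ^ 2 ≤ 4 * (u.val * v.val) ∨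
      (32 - (13 * u.val + 5 * v.val) % 32) ^ 2 ≤ 4 * (u.val * v.val) := by
  decide

lemma exists_sq_sub_le (u v : ℕ) (hu : 0 < u) (hv : 0 < v) (h : 16 ∣ v + 7 * u) :
    ∃ i : ℕ, 0 < i ∧ (32 * (i : ℤ) - (13 * u + 5 * v)) ^ 2 ≤ 4 * (u * v) := by
  set m := 13 * u + 5 * v with hm
  have hround : (m % 32) ^ 2 ≤ 4 * (u * v) ∨ (32 - m % 32) ^ 2 ≤ 4 * (u * v) := by
    by_cases hsmall : u * v < 64
    · exact sq_mod_le_of_mul_lt_64 ⟨u, by nlinarith⟩ ⟨v, by nlinarith⟩ hu hv hsmall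
        (Nat.mod_eq_zero_of_dvd h)
    · rcases le_total (m % 32) 16 with h16 | h16
      · left; nlinarith [Nat.pow_le_pow_left h16 2]
      · right; nlinarith [Nat.pow_le_pow_left (show 32 - m % 32 ≤ 16 by omega) 2]
  have hdiv : 32 * (m / 32) + m % 32 = m := Nat.div_add_mod m 32
  have hlt : m % 32 < 32 := Nat.mod_lt m (by norm_num)
  rcases hround with hr | hr
  · refine ⟨m / 32, Nat.pos_of_ne_zero fun hq => ?_, ?_⟩
    · rw [hq, mul_zero, zero_add] at hdiv
      rw [hdiv] at hr
      nlinarith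
    · have : 32 * ((m / 32 : ℕ) : ℤ) - (13 * u + 5 * v) = -((m % 32 : ℕ) : ℤ) := by omega
      rw [this, neg_sq]
      exact_mod_cast hr
  · refine ⟨m / 32 + 1, by omega, ?_⟩
    have : 32 * ((m / 32 + 1 : ℕ) : ℤ) - (13 * u + 5 * v) = ((32 - m % 32 : ℕ) : ℤ) := by omega
    rw [this]
    exact_mod_cast hr

def ℓ₁ (a : ℤ × ℤ) : ℤ := 3 * a.1 - 4 * a.2

def ℓ₂ (a : ℤ × ℤ) : ℤ := 12 * a.2 - 5 * a.1

def InDilate (i : ℕ) (a : ℤ × ℤ) : Prop :=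
  (32 * (i : ℤ) - (13 * ℓ₁ a + 5 * ℓ₂ a)) ^ 2 ≤ 4 * (ℓ₁ a * ℓ₂ a)

lemma toR_mem_smul_disk_iff {i : ℕ} (hi : 0 < i) (a : ℤ × ℤ) :
    toR a ∈ (i : ℝ) • disk ↔ InDilate i a := by
  have hi' : (0 : ℝ) < i := by exact_mod_cast hi
  rw [Set.mem_smul_set_iff_inv_smul_mem₀ hi'.ne', InDilate, ← Int.cast_le (R := ℝ)]
  simp only [disk, Set.mem_ofPred_eq, toR, Prod.smul_mk, smul_eq_mul, ℓ₁, ℓ₂]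
  push_cast
  have key : 256 * (i : ℝ) ^ 2 * (((i : ℝ)⁻¹ * a.1 - 7 / 4) ^ 2 + ((i : ℝ)⁻¹ * a.2 - 1) ^ 2 -
      (1 / 4) ^ 2) = (32 * i - (13 * (3 * a.1 - 4 * a.2) + 5 * (12 * a.2 - 5 * a.1))) ^ 2 -
      4 * ((3 * a.1 - 4 * a.2) * (12 * a.2 - 5 * a.1)) := by
    field_simp
    ring
  rw [← sub_nonpos, ← sub_nonpos (b := (4 : ℝ) * _), ← key]
  have : (0 : ℝ) < 256 * (i : ℝ) ^ 2 := by positivity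
  constructor
  · intro h; nlinarith
  · intro h; nlinarith

lemma mem_circSem_iff {a : ℤ × ℤ} : a ∈ circSem ↔ a = 0 ∨ ∃ i : ℕ, 0 < i ∧ InDilate i a := by
  simp only [circSem, Set.mem_ofPred_eq]
  constructor
  · rintro (rfl | ⟨i, hi⟩)
    · exact .inl rfl
    rcases i.eq_zero_or_pos with rfl | hpos
    · rw [Nat.cast_zero, Set.zero_smul_set ⟨(7 / 4, 1), by simp [disk]⟩, Set.mem_zero] at hi
      exact .inl (toR_injective (hi.trans toR_zero.symm))
    · exact .inr ⟨i, hpos, (toR_mem_smul_disk_iff hpos a).1 hi⟩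
  · rintro (rfl | ⟨i, hi, h⟩)
    · exact .inl rfl
    · exact .inr ⟨i, (toR_mem_smul_disk_iff hi a).2 h⟩

lemma InDilate.nonneg {i : ℕ} {a : ℤ × ℤ} (h : InDilate i a) : 0 ≤ ℓ₁ a ∧ 0 ≤ ℓ₂ a := by
  unfold InDilate at h
  generalize ℓ₁ a = u, ℓ₂ a = v at h ⊢
  have hi : (0 : ℤ) ≤ i := by positivity
  have huv : 0 ≤ u * v := by nlinarith
  by_contra hneg
  have hlt : 13 * u + 5 * v < 0 := by
    rcases not_and_or.1 hneg with hu | hv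
    · have : v ≤ 0 := by nlinarith
      omega
    · have : u ≤ 0 := by nlinarith
      omega
  have hsq : (13 * u + 5 * v) ^ 2 ≤ (32 * i - (13 * u + 5 * v)) ^ 2 := by nlinarith
  nlinarith [sq_nonneg (13 * u - 5 * v), mul_pos_of_neg_of_neg hlt hlt]

lemma exists_inDilate_of_pos {a : ℤ × ℤ} (h₁ : 0 < ℓ₁ a) (h₂ : 0 < ℓ₂ a) :
    ∃ i : ℕ, 0 < i ∧ InDilate i a := by
  have hcong : (16 : ℤ) ∣ ℓ₂ a + 7 * ℓ₁ a := ⟨a.1 - a.2, by simp only [ℓ₁, ℓ₂]; ring⟩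
  unfold InDilate
  obtain ⟨u, hu⟩ := Int.eq_ofNat_of_zero_le h₁.le
  obtain ⟨v, hv⟩ := Int.eq_ofNat_of_zero_le h₂.le
  rw [hu, hv] at hcong ⊢
  exact exists_sq_sub_le u v (by omega) (by omega) (by exact_mod_cast hcong)

noncomputable def p₁ : ℝ × ℝ := (8 / 5, 6 / 5)

noncomputable def p₂ : ℝ × ℝ := (24 / 13, 10 / 13)

lemma smul_mem_disk_iff (r : ℝ) (t : ℝ × ℝ) :
    r • t ∈ disk ↔ (t.1 ^ 2 + t.2 ^ 2) * r ^ 2 - 2 * (7 / 4 * t.1 + t.2) * r + 4 ≤ 0 := by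
  simp only [disk, Set.mem_ofPred_eq, Prod.smul_fst, Prod.smul_snd, smul_eq_mul]
  rw [← sub_nonpos]
  ring_nf

lemma eq_p₁_or_p₂_of_tangent {t : ℝ × ℝ}
    (h : {x : ℝ × ℝ | x ∈ disk ∧ ∃ r : ℝ, 0 ≤ r ∧ x = r • t} = {t}) : t = p₁ ∨ t = p₂ := by
  have ht : t ∈ disk := (h.symm ▸ Set.mem_singleton t : t ∈ {x | x ∈ disk ∧ _}).1
  have ht0 : t ≠ 0 := by rintro rfl; norm_num [disk] at ht
  have huniq : ∀ r : ℝ, 0 ≤ r → r • t ∈ disk → r = 1 := by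
    intro r hr hrt
    have hrt' : r • t ∈ ({t} : Set (ℝ × ℝ)) := h ▸ ⟨hrt, r, hr, rfl⟩
    exact smul_left_injective ℝ ht0 (hrt'.trans (one_smul ℝ t).symm)
  set A := t.1 ^ 2 + t.2 ^ 2 with hAdef
  set B := 7 / 4 * t.1 + t.2 with hBdef
  have h1 : A - 2 * B + 4 ≤ 0 := by simpa using (smul_mem_disk_iff 1 t).1 (by rwa [one_smul])
  have hApos : 0 < A := by nlinarith [sq_nonneg (4 * t.1 - 7 * t.2)]
  -- the power of the origin is 4: `r ↦ 4 / (A r)` preserves the chord of the ray through `t`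
  have hA4 : A = 4 := by
    have h4A := huniq (4 / A) (by positivity) <| (smul_mem_disk_iff _ t).2 <| by
      rw [← hAdef, ← hBdef]
      have : A * (4 / A) ^ 2 - 2 * B * (4 / A) + 4 = 4 / A * (A - 2 * B + 4) := by
        field_simp; ring
      rw [this]
      exact mul_nonpos_of_nonneg_of_nonpos (by positivity) h1
    field_simp at h4A
    linarith
  -- `B / 4` is the vertex of the quadratic, so it lies in the chord as well
  have hB4 : B = 4 := by
    have hB : 4 ≤ B := by linarith
    have := huniq (B / 4) (by positivity) <| (smul_mem_disk_iff _ t).2 <| by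
      rw [← hAdef, ← hBdef, hA4]; nlinarith
    linarith
  have hfactor : (5 * t.1 - 8) * (13 * t.1 - 24) = 0 := by
    linear_combination 16 * hA4 + 4 * (7 * t.1 - 16 - 4 * t.2) * hB4
  rcases mul_eq_zero.1 hfactor with h' | h'
  · exact .inl (Prod.ext (by simp [p₁]; linarith) (by simp [p₁]; linarith))
  · exact .inr (Prod.ext (by simp [p₂]; linarith) (by simp [p₂]; linarith))

lemma toR_eq_smul_p₁_add_smul_p₂ (a : ℤ × ℤ) :
    toR a = (ℓ₂ a * (5 / 32) : ℝ) • p₁ + (ℓ₁ a * (13 / 32) : ℝ) • p₂ := by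
  simp only [toR, p₁, p₂, ℓ₁, ℓ₂, Prod.smul_mk, Prod.mk_add_mk, smul_eq_mul]
  push_cast
  ext <;> ring

lemma linearIndependent_p₁_p₂ : LinearIndependent ℝ ![p₁, p₂] := by
  rw [LinearIndependent.pair_iff]
  intro s t h
  simp only [p₁, p₂, Prod.smul_mk, Prod.mk_add_mk, smul_eq_mul, Prod.mk_eq_zero] at h
  constructor <;> linarith [h.1, h.2]

section Coordinates

variable {a : ℤ × ℤ}

lemma inConeR_p₁_p₂_iff : inConeR p₁ p₂ a ↔ 0 ≤ ℓ₁ a ∧ 0 ≤ ℓ₂ a := by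
  rw [inConeR_iff_of_linearIndependent linearIndependent_p₁_p₂ (toR_eq_smul_p₁_add_smul_p₂ a),
    and_comm, mul_nonneg_iff_of_pos_right (by norm_num), mul_nonneg_iff_of_pos_right (by norm_num),
    Int.cast_nonneg_iff, Int.cast_nonneg_iff]

lemma onRayR_p₁_iff : onRayR p₁ a ↔ 0 ≤ ℓ₂ a ∧ ℓ₁ a = 0 := by
  rw [onRayR_iff_of_linearIndependent linearIndependent_p₁_p₂ (toR_eq_smul_p₁_add_smul_p₂ a),
    mul_nonneg_iff_of_pos_right (by norm_num), Int.cast_nonneg_iff]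
  simp

lemma onRayR_p₂_iff : onRayR p₂ a ↔ 0 ≤ ℓ₁ a ∧ ℓ₂ a = 0 := by
  rw [onRayR_iff_of_linearIndependent (LinearIndependent.pair_symm_iff.1 linearIndependent_p₁_p₂)
    ((toR_eq_smul_p₁_add_smul_p₂ a).trans (add_comm _ _)),
    mul_nonneg_iff_of_pos_right (by norm_num), Int.cast_nonneg_iff]
  simp

lemma isNat_of_nonneg (h₁ : 0 ≤ ℓ₁ a) (h₂ : 0 ≤ ℓ₂ a) : isNat a := by
  unfold isNat
  unfold ℓ₁ ℓ₂ at *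
  omega

lemma mem_circSem_iff_of_not_onRayR {t₁ t₂ : ℝ × ℝ}
    (ht : (t₁ = p₁ ∧ t₂ = p₂) ∨ (t₁ = p₂ ∧ t₂ = p₁))
    (h₁ : ¬ onRayR t₁ a) (h₂ : ¬ onRayR t₂ a) : a ∈ circSem ↔ isNat a ∧ inConeR t₁ t₂ a := by
  have hoff : ¬ (0 ≤ ℓ₂ a ∧ ℓ₁ a = 0) ∧ ¬ (0 ≤ ℓ₁ a ∧ ℓ₂ a = 0) := by
    rcases ht with ⟨rfl, rfl⟩ | ⟨rfl, rfl⟩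
    · rw [onRayR_p₁_iff, onRayR_p₂_iff] at *
      exact ⟨h₁, h₂⟩
    · rw [onRayR_p₁_iff, onRayR_p₂_iff] at *
      exact ⟨h₂, h₁⟩
  have hcone : inConeR t₁ t₂ a ↔ 0 ≤ ℓ₁ a ∧ 0 ≤ ℓ₂ a := by
    rcases ht with ⟨rfl, rfl⟩ | ⟨rfl, rfl⟩
    · exact inConeR_p₁_p₂_iff
    · exact inConeR_comm.trans inConeR_p₁_p₂_iff
  rw [hcone, mem_circSem_iff]
  constructor
  · rintro (rfl | ⟨i, -, hi⟩)
    · simp [ℓ₁, ℓ₂] at hoff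
    · exact ⟨isNat_of_nonneg hi.nonneg.1 hi.nonneg.2, hi.nonneg⟩
  · rintro ⟨-, hℓ₁, hℓ₂⟩
    exact .inr (exists_inDilate_of_pos (by omega) (by omega))

lemma onRayR_p₁_iff_exists_nsmul : onRayR p₁ a ↔ ∃ k : ℕ, a = k • ((4, 3) : ℤ × ℤ) := by
  rw [onRayR_p₁_iff]
  constructor
  · rintro ⟨h₂, h₁⟩
    unfold ℓ₁ ℓ₂ at *
    exact ⟨(a.1 - a.2).toNat, Prod.ext
      (by simp only [Prod.smul_mk, Int.nsmul_eq_mul, Int.ofNat_toNat]; omega)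
      (by simp only [Prod.smul_mk, Int.nsmul_eq_mul, Int.ofNat_toNat]; omega)⟩
  · rintro ⟨k, rfl⟩
    simp only [ℓ₁, ℓ₂, Prod.smul_mk, Int.nsmul_eq_mul]
    omega

lemma onRayR_p₂_iff_exists_nsmul : onRayR p₂ a ↔ ∃ k : ℕ, a = k • ((12, 5) : ℤ × ℤ) := by
  rw [onRayR_p₂_iff]
  constructor
  · rintro ⟨h₁, h₂⟩
    unfold ℓ₁ ℓ₂ at *
    exact ⟨(5 * a.2 - 2 * a.1).toNat, Prod.ext
      (by simp only [Prod.smul_mk, Int.nsmul_eq_mul, Int.ofNat_toNat]; omega)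
      (by simp only [Prod.smul_mk, Int.nsmul_eq_mul, Int.ofNat_toNat]; omega)⟩
  · rintro ⟨k, rfl⟩
    simp only [ℓ₁, ℓ₂, Prod.smul_mk, Int.nsmul_eq_mul]
    omega

lemma nsmul_mem_circSem_iff_p₁ (k : ℕ) : k • ((4, 3) : ℤ × ℤ) ∈ circSem ↔ Even k := by
  have h₁ : ℓ₁ (k • ((4, 3) : ℤ × ℤ)) = 0 := by
    simp only [ℓ₁, Prod.smul_mk, Int.nsmul_eq_mul]; ring
  have h₂ : ℓ₂ (k • ((4, 3) : ℤ × ℤ)) = 16 * k := by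
    simp only [ℓ₂, Prod.smul_mk, Int.nsmul_eq_mul]; ring
  rw [mem_circSem_iff, smul_eq_zero_iff_left (by decide : ((4, 3) : ℤ × ℤ) ≠ 0), Nat.even_iff]
  simp only [InDilate, h₁, h₂, mul_zero, zero_mul, zero_add, sq_nonpos_iff]
  constructor
  · rintro (rfl | ⟨i, -, hi⟩) <;> omega
  · intro hk
    rcases Nat.eq_zero_or_pos k with hk0 | hk0
    · exact .inl hk0
    · exact .inr ⟨5 * k / 2, by omega, by omega⟩

lemma nsmul_mem_circSem_iff_p₂ (k : ℕ) : k • ((12, 5) : ℤ × ℤ) ∈ circSem ↔ Even k := by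
  have h₁ : ℓ₁ (k • ((12, 5) : ℤ × ℤ)) = 16 * k := by
    simp only [ℓ₁, Prod.smul_mk, Int.nsmul_eq_mul]; ring
  have h₂ : ℓ₂ (k • ((12, 5) : ℤ × ℤ)) = 0 := by
    simp only [ℓ₂, Prod.smul_mk, Int.nsmul_eq_mul]; ring
  rw [mem_circSem_iff, smul_eq_zero_iff_left (by decide : ((12, 5) : ℤ × ℤ) ≠ 0), Nat.even_iff]
  simp only [InDilate, h₁, h₂, mul_zero, add_zero, sq_nonpos_iff]
  constructor
  · rintro (rfl | ⟨i, -, hi⟩) <;> omega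
  · intro hk
    rcases Nat.eq_zero_or_pos k with hk0 | hk0
    · exact .inl hk0
    · exact .inr ⟨13 * k / 2, by omega, by omega⟩

end Coordinates

lemma exists_generator_of_tangent {t : ℝ × ℝ} (ht : t = p₁ ∨ t = p₂) :
    ∃ e : ℤ × ℤ, e ≠ 0 ∧ (∀ a, onRayR t a ↔ ∃ k : ℕ, a = k • e) ∧
      ∀ k : ℕ, k • e ∈ circSem ↔ Even k := by
  rcases ht with rfl | rfl
  · exact ⟨(4, 3), by simp, fun _ => onRayR_p₁_iff_exists_nsmul, nsmul_mem_circSem_iff_p₁⟩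
  · exact ⟨(12, 5), by simp, fun _ => onRayR_p₂_iff_exists_nsmul, nsmul_mem_circSem_iff_p₂⟩

end CircleSemigroup

/-- Figure 1 example: for the circle with center `(7/4,1)` and radius `1/4`, with `τ₁, τ₂`
the tangent rays from the origin (touching the disk at `t₁, t₂`) and `nᵢ` the smallest
element of `𝔖` on `τᵢ`, one has `int(C) = int(𝔖)` and `𝔖 ∩ τᵢ = ⟨nᵢ⟩`; hence `𝔖`
satisfies the combinatorial Cohen-Macaulay condition. -/
theorem stmt18 (t₁ t₂ : ℝ × ℝ) (htne : t₁ ≠ t₂)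
    -- each tangent ray meets the disk in exactly the tangent point
    (htan₁ : {x : ℝ × ℝ | x ∈ disk ∧ ∃ r : ℝ, 0 ≤ r ∧ x = r • t₁} = {t₁})
    (htan₂ : {x : ℝ × ℝ | x ∈ disk ∧ ∃ r : ℝ, 0 ≤ r ∧ x = r • t₂} = {t₂})
    (n₁ n₂ : ℤ × ℤ) (hn₁0 : n₁ ≠ 0) (hn₂0 : n₂ ≠ 0)
    (hn₁S : n₁ ∈ circSem) (hn₂S : n₂ ∈ circSem)
    (hn₁τ : onRayR t₁ n₁) (hn₂τ : onRayR t₂ n₂)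
    -- nᵢ is the element of 𝔖 ∩ τᵢ of smallest module
    (hmin₁ : ∀ a ∈ circSem, a ≠ 0 → onRayR t₁ a → ∃ r : ℝ, 1 ≤ r ∧ toR a = r • toR n₁)
    (hmin₂ : ∀ a ∈ circSem, a ≠ 0 → onRayR t₂ a → ∃ r : ℝ, 1 ≤ r ∧ toR a = r • toR n₂) :
    (∀ a : ℤ × ℤ,
      (isNat a ∧ inConeR t₁ t₂ a ∧ ¬ onRayR t₁ a ∧ ¬ onRayR t₂ a) ↔
      (a ∈ circSem ∧ ¬ onRayR t₁ a ∧ ¬ onRayR t₂ a)) ∧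
    (∀ a : ℤ × ℤ, (a ∈ circSem ∧ onRayR t₁ a) ↔ ∃ k : ℕ, a = k • n₁) ∧
    (∀ a : ℤ × ℤ, (a ∈ circSem ∧ onRayR t₂ a) ↔ ∃ k : ℕ, a = k • n₂) ∧
    (∀ a : ℤ × ℤ, isNat a → inConeR t₁ t₂ a → a ∉ circSem →
      (a + n₁ ∉ circSem ∨ a + n₂ ∉ circSem)) := by
  open CircleSemigroup in
  have ht : (t₁ = p₁ ∧ t₂ = p₂) ∨ (t₁ = p₂ ∧ t₂ = p₁) := by
    rcases eq_p₁_or_p₂_of_tangent htan₁ with rfl | rfl <;>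
      rcases eq_p₁_or_p₂_of_tangent htan₂ with rfl | rfl <;> simp_all
  obtain ⟨e₁, he₁, hR₁, hS₁⟩ := exists_generator_of_tangent (eq_p₁_or_p₂_of_tangent htan₁)
  obtain ⟨e₂, he₂, hR₂, hS₂⟩ := exists_generator_of_tangent (eq_p₁_or_p₂_of_tangent htan₂)
  obtain rfl := eq_two_nsmul_of_minimal hR₁ hS₁ he₁ hn₁0 hn₁S hn₁τ hmin₁
  obtain rfl := eq_two_nsmul_of_minimal hR₂ hS₂ he₂ hn₂0 hn₂S hn₂τ hmin₂
  refine ⟨fun a => ?_, mem_and_iff_exists_two_nsmul hR₁ hS₁,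
    mem_and_iff_exists_two_nsmul hR₂ hS₂, fun a hN hC haS => ?_⟩
  · rw [← and_assoc]
    exact and_congr_left fun ⟨h₁, h₂⟩ => (mem_circSem_iff_of_not_onRayR ht h₁ h₂).symm
  · by_cases h₁ : onRayR t₁ a
    · exact .inl (add_two_nsmul_notMem hR₁ hS₁ h₁ haS)
    by_cases h₂ : onRayR t₂ a
    · exact .inr (add_two_nsmul_notMem hR₂ hS₂ h₂ haS)
    exact absurd ((mem_circSem_iff_of_not_onRayR ht h₁ h₂).2 ⟨hN, hC⟩) haS
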